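/- arXiv:2508.16205 — 5 statements merged into one kernel-verified Lean document; each statement's English description precedes it below -/
import Mathlib

section
/- Let n ≥ 1 and let H and H_Δ be Hermitian n×n complex matrices, and let T_s ≥ 0. Then ‖I - exp(i T_s H)·exp(-i T_s (H + H_Δ))‖ ≤ ‖I - exp(i T_s H_Δ)‖ + (T_s²/2)·‖[H, H_Δ]‖, where ‖·‖ is the operator norm induced by the Euclidean norm on ℂⁿ and [A,B] = AB - BA. -/
/-!
For skew-adjoint `a = i H`, `b = i HΔ` in a C⋆-algebra,
`1 - e^{ta} e^{-t(a+b)} = (1 - e^{-tb}) + e^{ta} (e^{-ta} e^{-tb} - e^{-t(a+b)})`.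
Multiplying by unitaries preserves norms, so the first term has the norm of `1 - e^{tb}` and the
second is the first-order Trotter error. Along `Φ s = e^{(t-s)(a+b)} e^{sa} e^{sb}` the
derivative is the commutator `[e^{sa}, b]` sandwiched between two unitaries, and `[e^{sa}, b]` has
norm at most `s ‖[a, b]‖` (differentiate `e^{sa} b e^{-sa}`), so integrating gives
`t² / 2 · ‖[a, b]‖`.
-/

open NormedSpace

/-- The operator norm of a matrix induced by the Euclidean norm on `ℂⁿ`. -/
noncomputable def opNorm {n : ℕ} (M : Matrix (Fin n) (Fin n) ℂ) : ℝ :=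
  ‖Matrix.toEuclideanCLM (𝕜 := ℂ) (n := Fin n) M‖

section

variable {A : Type*} [CStarAlgebra A]

lemma exp_smul_mem_unitary {a : A} (ha : a ∈ skewAdjoint A) (t : ℝ) :
    exp (t • a) ∈ unitary A :=
  let _ : NormedAlgebra ℚ A := .restrictScalars ℚ ℂ A
  exp_mem_unitary_of_mem_skewAdjoint (skewAdjoint.smul_mem t ha)

lemma norm_exp_smul_mul_sub_mul_exp_smul_le {a : A} (ha : a ∈ skewAdjoint A) (b : A) {s : ℝ}
    (hs : 0 ≤ s) :
    ‖exp (s • a) * b - b * exp (s • a)‖ ≤ s * ‖a * b - b * a‖ := by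
  let _ : NormedAlgebra ℚ A := .restrictScalars ℚ ℂ A
  set f : ℝ → A := fun t => exp (t • a) * b * exp (t • -a)
  have hf (t : ℝ) : HasDerivAt f (exp (t • a) * (a * b - b * a) * exp (t • -a)) t := by
    have hcomm : a * exp (t • -a) = exp (t • -a) * a :=
      ((Commute.refl a).neg_right.smul_right t).exp_right.eq
    refine (((hasDerivAt_exp_smul_const a t).mul_const b).mul
      (hasDerivAt_exp_smul_const (-a) t)).congr_deriv ?_
    rw [mul_neg, ← hcomm]
    noncomm_ring
  have hf_le : ∀ t ∈ Set.Ico 0 s,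
      ‖exp (t • a) * (a * b - b * a) * exp (t • -a)‖ ≤ ‖a * b - b * a‖ := by
    intro t _
    rw [mul_assoc, CStarRing.norm_mem_unitary_mul _ (exp_smul_mem_unitary ha t),
      CStarRing.norm_mul_mem_unitary _ (exp_smul_mem_unitary (neg_mem ha) t)]
  have hmvt := norm_image_sub_le_of_norm_deriv_le_segment'
    (fun t _ => (hf t).hasDerivWithinAt) hf_le s ⟨hs, le_rfl⟩
  have hconj : exp (s • a) * b - b * exp (s • a) = (f s - f 0) * exp (s • a) := by
    simp only [f, zero_smul, smul_neg, neg_zero, exp_zero, one_mul, mul_one, sub_mul, mul_assoc,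
      ← exp_add_of_commute (Commute.refl (s • a)).neg_left, neg_add_cancel]
  rw [hconj, CStarRing.norm_mul_mem_unitary _ (exp_smul_mem_unitary ha s), mul_comm]
  simpa using hmvt

theorem norm_exp_smul_mul_exp_smul_sub_exp_smul_add_le {a b : A} (ha : a ∈ skewAdjoint A)
    (hb : b ∈ skewAdjoint A) {t : ℝ} (ht : 0 ≤ t) :
    ‖exp (t • a) * exp (t • b) - exp (t • (a + b))‖ ≤
      t ^ 2 / 2 * ‖a * b - b * a‖ := by
  let _ : NormedAlgebra ℚ A := .restrictScalars ℚ ℂ A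
  set Φ : ℝ → A := fun s => exp ((t - s) • (a + b)) * exp (s • a) * exp (s • b)
  set Φ' : ℝ → A := fun s =>
    exp ((t - s) • (a + b)) * ((exp (s • a) * b - b * exp (s • a)) * exp (s • b))
  have hΦ (s : ℝ) : HasDerivAt Φ (Φ' s) s := by
    have hc := (hasDerivAt_exp_smul_const (a + b) (t - s)).scomp s
      ((hasDerivAt_id s).const_sub t)
    refine ((hc.mul (hasDerivAt_exp_smul_const a s)).mul
      (hasDerivAt_exp_smul_const b s)).congr_deriv ?_
    have hua : exp (s • a) * a = a * exp (s • a) :=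
      ((Commute.refl a).smul_right s).exp_right.eq.symm
    have hub : exp (s • b) * b = b * exp (s • b) :=
      ((Commute.refl b).smul_right s).exp_right.eq.symm
    simp only [Φ', Pi.mul_apply, Function.comp_apply, neg_one_smul, mul_assoc, hua, hub]
    noncomm_ring
  have hΦ'_le : ∀ s ∈ Set.Ico 0 t, ‖Φ' s‖ ≤ s * ‖a * b - b * a‖ := by
    intro s hs
    rw [CStarRing.norm_mem_unitary_mul _ (exp_smul_mem_unitary (add_mem ha hb) _),
      CStarRing.norm_mul_mem_unitary _ (exp_smul_mem_unitary hb s)]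
    exact norm_exp_smul_mul_sub_mul_exp_smul_le ha b hs.1
  have hB (s : ℝ) :
      HasDerivAt (fun s => s ^ 2 / 2 * ‖a * b - b * a‖) (s * ‖a * b - b * a‖) s := by
    refine (((hasDerivAt_pow 2 s).div_const 2).mul_const _).congr_deriv ?_
    ring
  have := image_norm_le_of_norm_deriv_right_le_deriv_boundary (f := fun s => Φ s - Φ 0)
    (fun s _ => ((hΦ s).sub_const _).continuousAt.continuousWithinAt)
    (fun s _ => ((hΦ s).sub_const _).hasDerivWithinAt) (by simp) hB hΦ'_le ⟨ht, le_rfl⟩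
  simpa [Φ] using this

lemma norm_one_sub_exp_neg {b : A} (hb : b ∈ skewAdjoint A) :
    ‖1 - exp (-b)‖ = ‖1 - exp b‖ := by
  let _ : NormedAlgebra ℚ A := .restrictScalars ℚ ℂ A
  rw [← CStarRing.norm_mem_unitary_mul _ (exp_mem_unitary_of_mem_skewAdjoint hb), mul_sub,
    mul_one, ← exp_add_of_commute (Commute.refl b).neg_right, add_neg_cancel, exp_zero,
    norm_sub_rev]

theorem norm_one_sub_exp_smul_mul_exp_neg_smul_add_le {a b : A} (ha : a ∈ skewAdjoint A)
    (hb : b ∈ skewAdjoint A) {t : ℝ} (ht : 0 ≤ t) :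
    ‖1 - exp (t • a) * exp (-(t • (a + b)))‖ ≤
      ‖1 - exp (t • b)‖ + t ^ 2 / 2 * ‖a * b - b * a‖ := by
  let _ : NormedAlgebra ℚ A := .restrictScalars ℚ ℂ A
  have hinv : exp (t • a) * exp (t • -a) = 1 := by
    rw [smul_neg, ← exp_add_of_commute (Commute.refl _).neg_right, add_neg_cancel, exp_zero]
  have hsplit : 1 - exp (t • a) * exp (-(t • (a + b))) =
      (1 - exp (t • -b)) +
        exp (t • a) * (exp (t • -a) * exp (t • -b) - exp (t • (-a + -b))) := by
    rw [mul_sub, ← mul_assoc, hinv, one_mul, ← neg_add, smul_neg, smul_neg]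
    abel
  have hfirst : ‖1 - exp (t • -b)‖ = ‖1 - exp (t • b)‖ := by
    rw [smul_neg]
    exact norm_one_sub_exp_neg (skewAdjoint.smul_mem t hb)
  have hsecond : ‖exp (t • a) * (exp (t • -a) * exp (t • -b) - exp (t • (-a + -b)))‖ ≤
      t ^ 2 / 2 * ‖a * b - b * a‖ := by
    rw [CStarRing.norm_mem_unitary_mul _ (exp_smul_mem_unitary ha t)]
    simpa only [neg_mul_neg] using
      norm_exp_smul_mul_exp_smul_sub_exp_smul_add_le (neg_mem ha) (neg_mem hb) ht
  rw [hsplit]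
  exact (norm_add_le _ _).trans (add_le_add hfirst.le hsecond)

theorem norm_one_sub_exp_mul_exp_le {h d : A} (hh : IsSelfAdjoint h) (hd : IsSelfAdjoint d)
    {t : ℝ} (ht : 0 ≤ t) :
    ‖1 - exp ((Complex.I * t) • h) * exp ((-(Complex.I * t)) • (h + d))‖ ≤
      ‖1 - exp ((Complex.I * t) • d)‖ + t ^ 2 / 2 * ‖h * d - d * h‖ := by
  have hI (x : A) : (Complex.I * t) • x = t • Complex.I • x := by
    rw [mul_comm, mul_smul, Complex.coe_smul]
  have hcommutator :
      ‖Complex.I • h * Complex.I • d - Complex.I • d * Complex.I • h‖ = ‖h * d - d * h‖ := by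
    rw [smul_mul_smul_comm, smul_mul_smul_comm, ← smul_sub, norm_smul, Complex.I_mul_I,
      norm_neg, norm_one, one_mul]
  rw [neg_smul, hI, hI, hI, smul_add, ← hcommutator]
  exact norm_one_sub_exp_smul_mul_exp_neg_smul_add_le
    (hh.smul_mem_skewAdjoint Complex.conj_I) (hd.smul_mem_skewAdjoint Complex.conj_I) ht

end

theorem stmt1_general (n : ℕ) (H HΔ : Matrix (Fin n) (Fin n) ℂ)
    (hH : H.IsHermitian) (hHΔ : HΔ.IsHermitian) (Ts : ℝ) (hTs : 0 ≤ Ts) :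
    opNorm (1 - exp ((Complex.I * (Ts : ℂ)) • H)
        * exp ((-(Complex.I * (Ts : ℂ))) • (H + HΔ)))
      ≤ opNorm (1 - exp ((Complex.I * (Ts : ℂ)) • HΔ))
        + Ts ^ 2 / 2 * opNorm (H * HΔ - HΔ * H) := by
  -- with the L² operator norm, matrices form a C⋆-algebra whose norm is `opNorm` by definition
  open scoped Matrix.Norms.L2Operator in
  exact norm_one_sub_exp_mul_exp_le hH.isSelfAdjoint hHΔ.isSelfAdjoint hTs

theorem stmt1 (n : ℕ) (hn : 1 ≤ n) (H HΔ : Matrix (Fin n) (Fin n) ℂ)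
    (hH : H.IsHermitian) (hHΔ : HΔ.IsHermitian) (Ts : ℝ) (hTs : 0 ≤ Ts) :
    opNorm (1 - exp ((Complex.I * (Ts : ℂ)) • H)
        * exp ((-(Complex.I * (Ts : ℂ))) • (H + HΔ)))
      ≤ opNorm (1 - exp ((Complex.I * (Ts : ℂ)) • HΔ))
        + Ts ^ 2 / 2 * opNorm (H * HΔ - HΔ * H) :=
  stmt1_general n H HΔ hH hHΔ Ts hTs
end

section
/- Let l ≥ 1 be an integer and let θ_1,…,θ_l be real numbers with 0 ≤ θ_i ≤ π/2 for each i and θ_1 + … + θ_l ≤ π/2. Let φ_0, φ_1, …, φ_l be unit vectors in ℂ², and let W_1,…,W_l be unitary 2×2 complex matrices such that |⟨φ_i, W_i φ_{i-1}⟩| ≥ cos(θ_i) for each i = 1,…,l. Then |⟨φ_l, W_l W_{l-1} ⋯ W_1 φ_0⟩| ≥ cos(θ_1 + … + θ_l). -/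
/-!
Let `u, v, w` be unit vectors with `|⟪v, u⟫| ≥ cos α`, `|⟪w, v⟫| ≥ cos β`, `α, β ∈ [0, π/2]`.
Split `u` and `w` along the middle vector `v`: `u = ⟪v, u⟫ v + u⊥`, `w = ⟪v, w⟫ v + w⊥`.
Then `⟪w, u⟫ = ⟪w, v⟫ ⟪v, u⟫ + ⟪w⊥, u⊥⟫`, and since `‖u⊥‖² = 1 - |⟪v, u⟫|² ≤ sin² α` (likewise
for `w⊥` and `β`), Cauchy–Schwarz gives `|⟪w, u⟫| ≥ cos β cos α - sin β sin α = cos (α + β)`.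
So the angle `arccos |⟪x, y⟫|` between unit vectors satisfies the triangle inequality, in any
dimension. Unitaries preserve overlaps, so induction on `l`, with `v = W_l φ_{l-1}` as the
middle vector, chains these steps.
-/

open scoped InnerProductSpace Matrix

/-- The action of an `n × n` complex matrix on `ℂⁿ` with the Euclidean inner product. -/
noncomputable def act {n : ℕ} (M : Matrix (Fin n) (Fin n) ℂ)
    (v : EuclideanSpace ℂ (Fin n)) : EuclideanSpace ℂ (Fin n) :=
  Matrix.toEuclideanLin M v

section InnerProductSpace

variable {𝕜 E : Type*} [RCLike 𝕜] [NormedAddCommGroup E] [InnerProductSpace 𝕜 E]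

lemma inner_eq_inner_mul_inner_add_inner_sub_smul {v : E} (hv : ‖v‖ = 1) (u w : E) :
    ⟪w, u⟫_𝕜 = ⟪w, v⟫_𝕜 * ⟪v, u⟫_𝕜 + ⟪w - ⟪v, w⟫_𝕜 • v, u - ⟪v, u⟫_𝕜 • v⟫_𝕜 := by
  have hvv : ⟪v, v⟫_𝕜 = 1 := by simp [inner_self_eq_norm_sq_to_K, hv]
  simp only [inner_sub_left, inner_sub_right, inner_smul_left, inner_smul_right, hvv,
    inner_conj_symm]
  ring

lemma norm_sub_inner_smul_sq {v : E} (hv : ‖v‖ = 1) (u : E) :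
    ‖u - ⟪v, u⟫_𝕜 • v‖ ^ 2 = ‖u‖ ^ 2 - ‖⟪v, u⟫_𝕜‖ ^ 2 := by
  have h := inner_eq_inner_mul_inner_add_inner_sub_smul (𝕜 := 𝕜) hv u u
  rw [← inner_conj_symm u v, RCLike.conj_mul, inner_self_eq_norm_sq_to_K,
    inner_self_eq_norm_sq_to_K] at h
  exact_mod_cast eq_sub_of_add_eq' h.symm

lemma norm_sub_inner_smul_le_sin {u v : E} (hu : ‖u‖ = 1) (hv : ‖v‖ = 1) {α : ℝ}
    (hα : α ∈ Set.Icc 0 (Real.pi / 2)) (h : Real.cos α ≤ ‖⟪v, u⟫_𝕜‖) :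
    ‖u - ⟪v, u⟫_𝕜 • v‖ ≤ Real.sin α := by
  have hcos : 0 ≤ Real.cos α :=
    Real.cos_nonneg_of_mem_Icc ⟨by linarith [hα.1, Real.pi_pos], hα.2⟩
  have hsin : 0 ≤ Real.sin α :=
    Real.sin_nonneg_of_nonneg_of_le_pi hα.1 (by linarith [hα.2, Real.pi_pos])
  rw [← pow_le_pow_iff_left₀ (norm_nonneg _) hsin two_ne_zero, norm_sub_inner_smul_sq hv, hu,
    Real.sin_sq]
  nlinarith [pow_le_pow_left₀ hcos h 2]

theorem cos_add_le_norm_inner {u v w : E} (hu : ‖u‖ = 1) (hv : ‖v‖ = 1) (hw : ‖w‖ = 1)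
    {α β : ℝ} (hα : α ∈ Set.Icc 0 (Real.pi / 2)) (hβ : β ∈ Set.Icc 0 (Real.pi / 2))
    (hvu : Real.cos α ≤ ‖⟪v, u⟫_𝕜‖) (hwv : Real.cos β ≤ ‖⟪w, v⟫_𝕜‖) :
    Real.cos (α + β) ≤ ‖⟪w, u⟫_𝕜‖ := by
  have hcos : 0 ≤ Real.cos α :=
    Real.cos_nonneg_of_mem_Icc ⟨by linarith [hα.1, Real.pi_pos], hα.2⟩
  have hsin : 0 ≤ Real.sin β :=
    Real.sin_nonneg_of_nonneg_of_le_pi hβ.1 (by linarith [hβ.2, Real.pi_pos])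
  have hu' := norm_sub_inner_smul_le_sin hu hv hα hvu
  have hw' := norm_sub_inner_smul_le_sin hw hv hβ (by rwa [norm_inner_symm (𝕜 := 𝕜)])
  calc Real.cos (α + β) = Real.cos β * Real.cos α - Real.sin β * Real.sin α := by
        rw [Real.cos_add]; ring
    _ ≤ ‖⟪w, v⟫_𝕜‖ * ‖⟪v, u⟫_𝕜‖ - ‖w - ⟪v, w⟫_𝕜 • v‖ * ‖u - ⟪v, u⟫_𝕜 • v‖ :=
        sub_le_sub (mul_le_mul hwv hvu hcos (norm_nonneg _))
          (mul_le_mul hw' hu' (norm_nonneg _) hsin)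
    _ ≤ ‖⟪w, v⟫_𝕜 * ⟪v, u⟫_𝕜‖ - ‖⟪w - ⟪v, w⟫_𝕜 • v, u - ⟪v, u⟫_𝕜 • v⟫_𝕜‖ := by
        rw [norm_mul]; exact sub_le_sub_left (norm_inner_le_norm _ _) _
    _ ≤ ‖⟪w, u⟫_𝕜‖ := by
        rw [inner_eq_inner_mul_inner_add_inner_sub_smul hv u w]; exact norm_sub_le_norm_add _ _

theorem cos_sum_le_norm_inner_list_prod [CompleteSpace E] {l : ℕ} (θ : Fin l → ℝ)
    (hθ0 : ∀ i, 0 ≤ θ i) (hθsum : ∑ i, θ i ≤ Real.pi / 2) (φ : Fin (l + 1) → E) (hφ : ∀ i, ‖φ i‖ = 1)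
    (T : Fin l → E →L[𝕜] E) (hT : ∀ i, T i ∈ unitary (E →L[𝕜] E))
    (hover : ∀ i : Fin l, Real.cos (θ i) ≤ ‖⟪φ i.succ, T i (φ i.castSucc)⟫_𝕜‖) :
    Real.cos (∑ i, θ i) ≤ ‖⟪φ (Fin.last l), (List.ofFn T).reverse.prod (φ 0)⟫_𝕜‖ := by
  induction l with
  | zero => simp [inner_self_eq_norm_sq_to_K, hφ 0]
  | succ l ih =>
    rw [Fin.sum_univ_castSucc] at hθsum ⊢
    set P := (List.ofFn fun i => T i.castSucc).reverse.prod
    have hP : P ∈ unitary (E →L[𝕜] E) :=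
      Submonoid.list_prod_mem _ fun S hS => by
        obtain ⟨i, rfl⟩ := List.mem_ofFn.1 (List.mem_reverse.1 hS)
        exact hT _
    have hprod : (List.ofFn T).reverse.prod = T (Fin.last l) * P := by
      rw [List.ofFn_succ', List.concat_eq_append, List.reverse_append, List.reverse_singleton,
        List.singleton_append, List.prod_cons]
    have hprefix : ∑ i : Fin l, θ i.castSucc ∈ Set.Icc 0 (Real.pi / 2) :=
      ⟨Finset.sum_nonneg fun i _ => hθ0 _, by linarith [hθ0 (Fin.last l)]⟩
    have hlast : θ (Fin.last l) ∈ Set.Icc 0 (Real.pi / 2) :=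
      ⟨hθ0 _, by linarith [hprefix.1]⟩
    have IH := ih (fun i => θ i.castSucc) (fun i => hθ0 _) hprefix.2 (fun i => φ i.castSucc)
      (fun i => hφ _) (fun i => T i.castSucc) (fun i => hT _)
      (fun i => by simpa only [Fin.succ_castSucc] using hover i.castSucc)
    have hTlast := ContinuousLinearMap.norm_map_of_mem_unitary (hT (Fin.last l))
    rw [hprod]
    refine cos_add_le_norm_inner (u := T (Fin.last l) (P (φ 0)))
      (v := T (Fin.last l) (φ (Fin.last l).castSucc))
      (by rw [hTlast, ContinuousLinearMap.norm_map_of_mem_unitary hP, hφ])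
      (by rw [hTlast, hφ]) (hφ _) hprefix hlast ?_ ?_
    · rw [ContinuousLinearMap.inner_map_map_of_mem_unitary (hT _)]
      simpa only [Fin.castSucc_zero] using IH
    · simpa only [Fin.succ_last] using hover (Fin.last l)

end InnerProductSpace

lemma act_eq_toEuclideanCLM {n : ℕ} (M : Matrix (Fin n) (Fin n) ℂ)
    (v : EuclideanSpace ℂ (Fin n)) :
    act M v = Matrix.toEuclideanCLM (𝕜 := ℂ) M v :=
  rfl

theorem stmt6_general (l : ℕ) (θ : Fin l → ℝ)
    (hθ0 : ∀ i, 0 ≤ θ i) (hθsum : ∑ i, θ i ≤ Real.pi / 2)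
    (φ : Fin (l + 1) → EuclideanSpace ℂ (Fin 2)) (hφ : ∀ i, ‖φ i‖ = 1)
    (W : Fin l → Matrix (Fin 2) (Fin 2) ℂ)
    (hW : ∀ i, (W i)ᴴ * W i = 1)
    (hover : ∀ i : Fin l, Real.cos (θ i) ≤ ‖⟪φ i.succ, act (W i) (φ i.castSucc)⟫_ℂ‖) :
    Real.cos (∑ i, θ i) ≤ ‖⟪φ (Fin.last l), act ((List.ofFn W).reverse.prod) (φ 0)⟫_ℂ‖ := by
  have hprod : Matrix.toEuclideanCLM (𝕜 := ℂ) (List.ofFn W).reverse.prod =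
      (List.ofFn fun i => Matrix.toEuclideanCLM (𝕜 := ℂ) (W i)).reverse.prod := by
    rw [map_list_prod, List.map_reverse, List.map_ofFn]
    rfl
  rw [act_eq_toEuclideanCLM, hprod]
  exact cos_sum_le_norm_inner_list_prod θ hθ0 hθsum φ hφ _
    (fun i => Unitary.map_mem _ (Matrix.mem_unitaryGroup_iff'.2 (hW i))) hover

theorem stmt6 (l : ℕ) (hl : 1 ≤ l) (θ : Fin l → ℝ)
    (hθ0 : ∀ i, 0 ≤ θ i) (hθhalf : ∀ i, θ i ≤ Real.pi / 2)
    (hθsum : ∑ i, θ i ≤ Real.pi / 2)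
    (φ : Fin (l + 1) → EuclideanSpace ℂ (Fin 2)) (hφ : ∀ i, ‖φ i‖ = 1)
    (W : Fin l → Matrix (Fin 2) (Fin 2) ℂ)
    (hW : ∀ i, (W i)ᴴ * W i = 1)
    (hover : ∀ i : Fin l, Real.cos (θ i) ≤ ‖⟪φ i.succ, act (W i) (φ i.castSucc)⟫_ℂ‖) :
    Real.cos (∑ i, θ i) ≤ ‖⟪φ (Fin.last l), act ((List.ofFn W).reverse.prod) (φ 0)⟫_ℂ‖ :=
  stmt6_general l θ hθ0 hθsum φ hφ W hW hover
end

section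
/- Let T_s ≥ 0 and Δ̄ ≥ 0 with Δ̄·T_s ≤ π/2. Let H : ℝ → (2×2 complex matrices) and H_Δ : ℝ → (2×2 complex matrices) be continuous with H(t) and H_Δ(t) Hermitian and ‖H_Δ(t)‖ ≤ Δ̄ for all t ∈ [0, T_s], where ‖·‖ is the operator norm induced by the Euclidean norm on ℂ². Suppose φ, ψ : ℝ → ℂ² satisfy, for all t ∈ [0, T_s], the derivative conditions φ'(t) = -i H(t) φ(t) and ψ'(t) = -i (H(t) + H_Δ(t)) ψ(t), with φ(0) = ψ(0) a unit vector. Then |⟨φ(T_s), ψ(T_s)⟩|² ≥ cos²(Δ̄ T_s). -/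
open scoped InnerProductSpace

/-!
Both evolutions preserve the norm, and the Hermitian `H` drops out of the derivative of the
overlap, so the real overlap `r = Re ⟪φ, ψ⟫` of the two unit vectors moves at rate
`Im ⟪φ, H_Δ ψ⟫`. Since `⟪ψ, H_Δ ψ⟫` is real, only the part `φ - r ψ` of `φ` orthogonal to `ψ`
(over `ℝ`) contributes, and it has length `√(1 - r²)`; hence `r' ≥ -Δ̄ √(1 - r²)` with
`r(0) = 1`. Comparing with the extremal solution `cos (Δ̄ t)` gives
`|⟪φ, ψ⟫| ≥ r(T_s) ≥ cos (Δ̄ T_s) ≥ 0`.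
-/

open Set Filter Topology Real

-- `r' = -K √(1 - r²)` is not Lipschitz at `r = 1`, so we compare with the barrier
-- `cos (K' (t + δ))`: it starts strictly below `r`, and wherever it meets `r` it falls strictly
-- faster than `r` can, since there `sin > 0` and `K' > K`.
theorem cos_mul_add_le_of_deriv_ge {K K' δ T : ℝ} {r r' : ℝ → ℝ}
    (hr : ContinuousOn r (Icc 0 T)) (hr' : ∀ t ∈ Ico 0 T, HasDerivWithinAt r (r' t) (Ici t) t)
    (hbound : ∀ t ∈ Ico 0 T, -(K * √(1 - r t ^ 2)) ≤ r' t) (hr0 : 1 ≤ r 0)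
    (hK : 0 ≤ K) (hKK' : K < K') (hδ : 0 < δ) (hπ : K' * (T + δ) < π) :
    ∀ t ∈ Icc 0 T, cos (K' * (t + δ)) ≤ r t := by
  have hbarrier (t : ℝ) :
      HasDerivAt (fun s ↦ cos (K' * (s + δ))) (-sin (K' * (t + δ)) * K') t := by
    simpa using ((hasDerivAt_id t).add_const δ |>.const_mul K').cos
  refine image_le_of_deriv_right_lt_deriv_boundary'
    (fun t _ ↦ (hbarrier t).continuousAt.continuousWithinAt)
    (fun t _ ↦ (hbarrier t).hasDerivWithinAt) ((cos_le_one _).trans (by simpa using hr0)) hr hr' ?_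
  intro t ht htouch
  have hu0 : 0 < K' * (t + δ) := mul_pos (by linarith) (by linarith [ht.1])
  have huπ : K' * (t + δ) < π := by nlinarith [ht.2]
  have hsin : 0 < sin (K' * (t + δ)) := sin_pos_of_pos_of_lt_pi hu0 huπ
  have hr't := hbound t ht
  rw [← htouch, ← sin_eq_sqrt_one_sub_cos_sq hu0.le huπ.le] at hr't
  nlinarith

theorem cos_mul_le_of_deriv_ge {K T : ℝ} {r r' : ℝ → ℝ}
    (hr : ContinuousOn r (Icc 0 T)) (hr' : ∀ t ∈ Ico 0 T, HasDerivWithinAt r (r' t) (Ici t) t)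
    (hbound : ∀ t ∈ Ico 0 T, -(K * √(1 - r t ^ 2)) ≤ r' t) (hr0 : 1 ≤ r 0)
    (hK : 0 ≤ K) (hT : 0 ≤ T) (hπ : K * T < π) :
    cos (K * T) ≤ r T := by
  have hcont : Continuous fun ε : ℝ ↦ (K + ε) * (T + ε) := by fun_prop
  have hlim : Tendsto (fun ε : ℝ ↦ cos ((K + ε) * (T + ε))) (𝓝[>] 0) (𝓝 (cos (K * T))) := by
    have h := ((continuous_cos.comp hcont).tendsto 0).mono_left (nhdsWithin_le_nhds (s := Ioi 0))
    simpa [Function.comp_def] using h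
  have hsmall : ∀ᶠ ε in 𝓝[>] (0 : ℝ), (K + ε) * (T + ε) < π :=
    nhdsWithin_le_nhds (hcont.continuousAt.eventually_lt continuousAt_const (by simpa using hπ))
  refine le_of_tendsto hlim ?_
  filter_upwards [hsmall, self_mem_nhdsWithin] with ε hε (hε0 : 0 < ε)
  exact cos_mul_add_le_of_deriv_ge hr hr' hbound hr0 hK (by linarith) hε0 hε T ⟨hT, le_rfl⟩

section Schrodinger

variable {E : Type*} [NormedAddCommGroup E] [InnerProductSpace ℂ E]

theorem hasDerivAt_re_inner_of_schrodinger {A D : E →ₗ[ℂ] E} (hA : A.IsSymmetric)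
    {φ ψ : ℝ → E} {t : ℝ} (hφ : HasDerivAt φ (-Complex.I • A (φ t)) t)
    (hψ : HasDerivAt ψ (-Complex.I • (A + D) (ψ t)) t) :
    HasDerivAt (fun s ↦ (⟪φ s, ψ s⟫_ℂ).re) (⟪φ t, D (ψ t)⟫_ℂ).im t := by
  have h : HasDerivAt (fun s ↦ (⟪φ s, ψ s⟫_ℂ).re)
      (Complex.reCLM (⟪φ t, -Complex.I • (A + D) (ψ t)⟫_ℂ + ⟪-Complex.I • A (φ t), ψ t⟫_ℂ)) t :=
    Complex.reCLM.hasFDerivAt.comp_hasDerivAt t (hφ.inner ℂ hψ)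
  convert h using 1
  rw [Complex.reCLM_apply, LinearMap.add_apply, inner_smul_right, inner_smul_left,
    inner_add_right, hA]
  simp

theorem norm_eq_norm_zero_of_schrodinger {T : ℝ} {A : ℝ → E →ₗ[ℂ] E}
    (hA : ∀ t ∈ Icc 0 T, (A t).IsSymmetric) {χ : ℝ → E}
    (hχ : ∀ t ∈ Icc 0 T, HasDerivAt χ (-Complex.I • A t (χ t)) t) :
    ∀ t ∈ Icc 0 T, ‖χ t‖ = ‖χ 0‖ := by
  have hderiv : ∀ t ∈ Icc 0 T, HasDerivAt (fun s ↦ ‖χ s‖ ^ 2) 0 t := by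
    intro t ht
    have h := hasDerivAt_re_inner_of_schrodinger (D := 0) (hA t ht) (hχ t ht)
      (by simpa using hχ t ht)
    simpa [inner_self_eq_norm_sq_to_K, ← Complex.ofReal_pow] using h
  have hconst := constant_of_has_deriv_right_zero
    (fun t ht ↦ (hderiv t ht).continuousAt.continuousWithinAt)
    (fun t ht ↦ (hderiv t (Ico_subset_Icc_self ht)).hasDerivWithinAt)
  exact fun t ht ↦ (pow_left_inj₀ (norm_nonneg _) (norm_nonneg _) two_ne_zero).mp (hconst t ht)

theorem abs_im_inner_le_mul_sqrt {D : E →ₗ[ℂ] E} (hD : D.IsSymmetric) {x y : E}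
    (hx : ‖x‖ = 1) (hy : ‖y‖ = 1) {K : ℝ} (hDy : ‖D y‖ ≤ K) :
    |(⟪x, D y⟫_ℂ).im| ≤ K * √(1 - (⟪x, y⟫_ℂ).re ^ 2) := by
  set a := (⟪x, y⟫_ℂ).re
  have him : (⟪x, D y⟫_ℂ).im = (⟪x - (a : ℂ) • y, D y⟫_ℂ).im := by
    have hreal : (⟪y, D y⟫_ℂ).im = 0 := hD.im_inner_self_apply y
    simp [hreal]
  have hperp : ‖x - (a : ℂ) • y‖ = √(1 - a ^ 2) := by
    rw [← Real.sqrt_sq (norm_nonneg _), norm_sub_sq (𝕜 := ℂ), inner_smul_right, norm_smul, hx,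
      hy]
    simp [a, sq]
    ring_nf
  calc |(⟪x, D y⟫_ℂ).im| ≤ ‖x - (a : ℂ) • y‖ * ‖D y‖ :=
        him ▸ (Complex.abs_im_le_norm _).trans (norm_inner_le_norm _ _)
    _ ≤ √(1 - a ^ 2) * K := by rw [hperp]; gcongr
    _ = K * √(1 - a ^ 2) := mul_comm _ _

end Schrodinger

theorem norm_act_le {n : ℕ} (M : Matrix (Fin n) (Fin n) ℂ) (v : EuclideanSpace ℂ (Fin n)) :
    ‖act M v‖ ≤ opNorm M * ‖v‖ :=
  (Matrix.toEuclideanCLM (𝕜 := ℂ) M).le_opNorm v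

theorem stmt7_general (Ts Δbar : ℝ) (hTs : 0 ≤ Ts) (hΔbar : 0 ≤ Δbar)
    (hbound : Δbar * Ts ≤ Real.pi / 2)
    (H HΔ : ℝ → Matrix (Fin 2) (Fin 2) ℂ)
    (hHherm : ∀ t ∈ Set.Icc (0 : ℝ) Ts, (H t).IsHermitian)
    (hHΔherm : ∀ t ∈ Set.Icc (0 : ℝ) Ts, (HΔ t).IsHermitian)
    (hHΔnorm : ∀ t ∈ Set.Icc (0 : ℝ) Ts, opNorm (HΔ t) ≤ Δbar)
    (φ ψ : ℝ → EuclideanSpace ℂ (Fin 2))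
    (hφ : ∀ t ∈ Set.Icc (0 : ℝ) Ts, HasDerivAt φ ((-Complex.I) • act (H t) (φ t)) t)
    (hψ : ∀ t ∈ Set.Icc (0 : ℝ) Ts, HasDerivAt ψ
      ((-Complex.I) • act (H t + HΔ t) (ψ t)) t)
    (hinit : φ 0 = ψ 0) (hunit : ‖φ 0‖ = 1) :
    Real.cos (Δbar * Ts) ^ 2 ≤ ‖⟪φ Ts, ψ Ts⟫_ℂ‖ ^ 2 := by
  have hHsymm (t : ℝ) (ht : t ∈ Icc 0 Ts) : (H t).toEuclideanLin.IsSymmetric :=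
    Matrix.isSymmetric_toEuclideanLin_iff.mpr (hHherm t ht)
  have hφ1 (t : ℝ) (ht : t ∈ Icc 0 Ts) : ‖φ t‖ = 1 :=
    (norm_eq_norm_zero_of_schrodinger hHsymm hφ t ht).trans hunit
  have hψ1 (t : ℝ) (ht : t ∈ Icc 0 Ts) : ‖ψ t‖ = 1 :=
    (norm_eq_norm_zero_of_schrodinger (A := fun t ↦ (H t + HΔ t).toEuclideanLin)
      (fun t ht ↦ Matrix.isSymmetric_toEuclideanLin_iff.mpr ((hHherm t ht).add (hHΔherm t ht)))
      hψ t ht).trans (hinit ▸ hunit)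
  have hderiv (t : ℝ) (ht : t ∈ Icc 0 Ts) : HasDerivAt (fun s ↦ (⟪φ s, ψ s⟫_ℂ).re)
      (⟪φ t, act (HΔ t) (ψ t)⟫_ℂ).im t :=
    hasDerivAt_re_inner_of_schrodinger (hHsymm t ht) (hφ t ht)
      (by simpa [act, map_add] using hψ t ht)
  have hslope (t : ℝ) (ht : t ∈ Icc 0 Ts) :
      |(⟪φ t, act (HΔ t) (ψ t)⟫_ℂ).im| ≤ Δbar * √(1 - (⟪φ t, ψ t⟫_ℂ).re ^ 2) :=
    abs_im_inner_le_mul_sqrt (Matrix.isSymmetric_toEuclideanLin_iff.mpr (hHΔherm t ht)) (hφ1 t ht)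
      (hψ1 t ht) ((norm_act_le _ _).trans (by rw [hψ1 t ht, mul_one]; exact hHΔnorm t ht))
  have hre : cos (Δbar * Ts) ≤ (⟪φ Ts, ψ Ts⟫_ℂ).re :=
    cos_mul_le_of_deriv_ge (fun t ht ↦ (hderiv t ht).continuousAt.continuousWithinAt)
      (fun t ht ↦ (hderiv t (Ico_subset_Icc_self ht)).hasDerivWithinAt)
      (fun t ht ↦ neg_le_of_abs_le (hslope t (Ico_subset_Icc_self ht)))
      (by simp [← hinit, hunit]) hΔbar hTs (by linarith [pi_pos])
  have hcos : 0 ≤ cos (Δbar * Ts) := cos_nonneg_of_mem_Icc ⟨by nlinarith [pi_pos], hbound⟩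
  gcongr
  exact hre.trans ((le_abs_self _).trans (Complex.abs_re_le_norm _))

theorem stmt7 (Ts Δbar : ℝ) (hTs : 0 ≤ Ts) (hΔbar : 0 ≤ Δbar)
    (hbound : Δbar * Ts ≤ Real.pi / 2)
    (H HΔ : ℝ → Matrix (Fin 2) (Fin 2) ℂ)
    (hHcont : Continuous H) (hHΔcont : Continuous HΔ)
    (hHherm : ∀ t ∈ Set.Icc (0 : ℝ) Ts, (H t).IsHermitian)
    (hHΔherm : ∀ t ∈ Set.Icc (0 : ℝ) Ts, (HΔ t).IsHermitian)
    (hHΔnorm : ∀ t ∈ Set.Icc (0 : ℝ) Ts, opNorm (HΔ t) ≤ Δbar)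
    (φ ψ : ℝ → EuclideanSpace ℂ (Fin 2))
    (hφ : ∀ t ∈ Set.Icc (0 : ℝ) Ts, HasDerivAt φ ((-Complex.I) • act (H t) (φ t)) t)
    (hψ : ∀ t ∈ Set.Icc (0 : ℝ) Ts, HasDerivAt ψ
      ((-Complex.I) • act (H t + HΔ t) (ψ t)) t)
    (hinit : φ 0 = ψ 0) (hunit : ‖φ 0‖ = 1) :
    Real.cos (Δbar * Ts) ^ 2 ≤ ‖⟪φ Ts, ψ Ts⟫_ℂ‖ ^ 2 :=
  stmt7_general Ts Δbar hTs hΔbar hbound H HΔ hHherm hHΔherm hHΔnorm φ ψ hφ hψ hinit hunit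
end

section
/- Let T_s ≥ 0, Δ̄ ≥ 0 and γ̄ ≥ 0 with Δ̄·T_s < π/2. Let H : ℝ → (2×2 complex matrices) and H_Δ : ℝ → (2×2 complex matrices) be continuous with H(t) and H_Δ(t) Hermitian and ‖H_Δ(t)‖ ≤ Δ̄ for all t ∈ [0, T_s], where ‖·‖ is the operator norm induced by the Euclidean norm on ℂ², and let γ : ℝ → ℝ be continuous with 0 ≤ γ(t) ≤ γ̄ for all t ∈ [0, T_s]. Suppose φ, ψ : ℝ → ℂ² satisfy, for all t ∈ [0, T_s], the derivative conditions φ'(t) = -i H(t) φ(t) and ψ'(t) = -i (H(t) + H_Δ(t)) ψ(t) - (1/2) γ(t) ψ(t), with φ(0) = ψ(0) a unit vector. Then |⟨φ(T_s), ψ(T_s)⟩|² ≥ cos²(Δ̄ T_s)·exp(-γ̄ T_s). -/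
/-!
Rescaling `ψ` by `exp (½ ∫₀ᵗ γ)` removes the uniform dissipation, so both `φ` and the rescaled
`χ` are unit vectors obeying Schrödinger equations whose generators differ by `H_Δ`. Their overlap
`g = ⟪φ, χ⟫` then satisfies `g' = -i ⟪φ, H_Δ χ⟫`; splitting `χ = g φ + w` with `w ⊥ φ`, the
component along `φ` only rotates the phase of `g` (the diagonal entry is real) and
`‖w‖ = √(1 - |g|²)`, so `u = |g|²` obeys `u' ≥ -2 Δ̄ √u √(1 - u)`. The solution of the
corresponding equality with `u(0) = 1` is `cos² (Δ̄ t)`, and a barrier argument bounds `u` from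
below by it; finally `|⟨φ, ψ⟩|² = exp (-∫₀ᵀ γ) |g|² ≥ exp (-γ̄ T) |g|²`.
-/

open scoped InnerProductSpace

open Set Filter Topology Real

section Barrier

variable {u u' : ℝ → ℝ} {b T : ℝ}

-- The barrier is shifted by `ε` because `u' = -2 b √u √(1 - u)` is not Lipschitz at `u = 1`
-- (`u ≡ 1` also solves it), so only a strictly faster-decaying barrier can be compared with `u` at a touching point.
theorem cos_sq_add_le_of_hasDerivAt {ε : ℝ} (hb : 0 ≤ b) (hT : 0 ≤ T) (hε : 0 < ε)
    (hbT : (b + ε) * T + ε < π / 2) (hu : ∀ t ∈ Icc 0 T, HasDerivAt u (u' t) t) (h0 : 1 ≤ u 0)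
    (hu' : ∀ t ∈ Ico 0 T, -(2 * b * √(u t) * √(1 - u t)) ≤ u' t) :
    cos ((b + ε) * T + ε) ^ 2 ≤ u T := by
  set s : ℝ → ℝ := fun t => (b + ε) * t + ε
  have hF : ∀ t, HasDerivAt (fun t => cos (s t) ^ 2)
      (-(2 * (b + ε) * cos (s t) * sin (s t))) t := by
    intro t
    refine ((((hasDerivAt_id t).const_mul (b + ε)).add_const ε).cos.pow 2).congr_deriv ?_
    simp only [id, s]
    ring
  refine image_le_of_deriv_right_lt_deriv_boundary' (f := fun t => cos (s t) ^ 2)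
    (fun t _ => (hF t).continuousAt.continuousWithinAt) (fun t _ => (hF t).hasDerivWithinAt)
    ?_ (fun t ht => (hu t ht).continuousAt.continuousWithinAt)
    (fun t ht => (hu t (Ico_subset_Icc_self ht)).hasDerivWithinAt) ?_ ⟨hT, le_rfl⟩
  · exact ((sq_le_one_iff_abs_le_one _).2 (abs_cos_le_one _)).trans h0
  · intro t ht hut
    have hst : 0 < s t := by
      have : 0 ≤ (b + ε) * t := mul_nonneg (by linarith) ht.1
      simp only [s]; linarith
    have hsT : s t < π / 2 := by
      have : (b + ε) * t ≤ (b + ε) * T := mul_le_mul_of_nonneg_left ht.2.le (by linarith)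
      simp only [s]; linarith
    have hcos : 0 < cos (s t) := cos_pos_of_mem_Ioo ⟨by linarith, hsT⟩
    have hsin : 0 < sin (s t) := sin_pos_of_pos_of_lt_pi hst (by linarith [pi_pos])
    have hbound := hu' t ht
    rw [← hut, sqrt_sq hcos.le, ← sin_sq, sqrt_sq hsin.le] at hbound
    nlinarith [mul_pos hcos hsin]

theorem cos_sq_le_of_hasDerivAt (hb : 0 ≤ b) (hT : 0 ≤ T) (hbT : b * T < π / 2)
    (hu : ∀ t ∈ Icc 0 T, HasDerivAt u (u' t) t) (h0 : 1 ≤ u 0)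
    (hu' : ∀ t ∈ Ico 0 T, -(2 * b * √(u t) * √(1 - u t)) ≤ u' t) :
    cos (b * T) ^ 2 ≤ u T := by
  have hcont : Continuous fun ε : ℝ => (b + ε) * T + ε := by fun_prop
  have hlim : Tendsto (fun ε => cos ((b + ε) * T + ε) ^ 2) (𝓝[>] 0) (𝓝 (cos (b * T) ^ 2)) := by
    have : Continuous fun ε => cos ((b + ε) * T + ε) ^ 2 := by fun_prop
    simpa using (this.tendsto 0).mono_left nhdsWithin_le_nhds
  have hsmall : ∀ᶠ ε in 𝓝[>] 0, (b + ε) * T + ε < π / 2 := by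
    refine nhdsWithin_le_nhds ((hcont.tendsto' 0 (b * T) ?_).eventually_lt_const hbT)
    simp
  refine le_of_tendsto hlim ?_
  filter_upwards [self_mem_nhdsWithin, hsmall] with ε hε hεT
  exact cos_sq_add_le_of_hasDerivAt hb hT hε hεT hu h0 hu'

end Barrier

section Schrodinger

variable {E : Type*} [NormedAddCommGroup E] [InnerProductSpace ℂ E]

theorem norm_eq_of_hasDerivAt_schrodinger {x : ℝ → E} {A : ℝ → E →ₗ[ℂ] E} {T : ℝ}
    (hA : ∀ t ∈ Icc 0 T, (A t).IsSymmetric)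
    (hx : ∀ t ∈ Icc 0 T, HasDerivAt x (-Complex.I • A t (x t)) t) :
    ∀ t ∈ Icc 0 T, ‖x t‖ = ‖x 0‖ := by
  have hderiv : ∀ t ∈ Icc 0 T, HasDerivAt (fun s => ⟪x s, x s⟫_ℂ) 0 t := by
    intro t ht
    refine ((hx t ht).inner ℂ (hx t ht)).congr_deriv ?_
    rw [inner_smul_left, inner_smul_right, hA t ht]
    simp
  have hconst := constant_of_has_deriv_right_zero
    (fun t ht => (hderiv t ht).continuousAt.continuousWithinAt)
    (fun t ht => (hderiv t (Ico_subset_Icc_self ht)).hasDerivWithinAt)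
  intro t ht
  have h := hconst t ht
  simp only [inner_self_eq_norm_sq_to_K] at h
  exact (pow_left_inj₀ (norm_nonneg _) (norm_nonneg _) two_ne_zero).1 (by exact_mod_cast h)

theorem hasDerivAt_inner_of_schrodinger {φ χ : ℝ → E} {A B : E →ₗ[ℂ] E} {t : ℝ}
    (hA : A.IsSymmetric) (hφ : HasDerivAt φ (-Complex.I • A (φ t)) t)
    (hχ : HasDerivAt χ (-Complex.I • (A + B) (χ t)) t) :
    HasDerivAt (fun s => ⟪φ s, χ s⟫_ℂ) (-Complex.I * ⟪φ t, B (χ t)⟫_ℂ) t := by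
  refine (hφ.inner ℂ hχ).congr_deriv ?_
  rw [inner_smul_left, inner_smul_right, LinearMap.add_apply, inner_add_right, hA]
  simp only [neg_mul, map_neg, Complex.conj_I, neg_neg]
  ring

theorem HasDerivAt.smul_cancel_damping {ψ : ℝ → E} {G : ℝ → ℝ} {C : E →ₗ[ℂ] E} {c t : ℝ}
    (hG : HasDerivAt G (c / 2 * G t) t)
    (hψ : HasDerivAt ψ (-Complex.I • C (ψ t) - (1 / 2 * c) • ψ t) t) :
    HasDerivAt (fun s => G s • ψ s) (-Complex.I • C (G t • ψ t)) t := by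
  refine (hG.smul hψ).congr_deriv ?_
  rw [LinearMap.map_smul_of_tower, smul_sub, smul_comm (G t) (-Complex.I), smul_smul,
    sub_add_eq_add_sub, sub_eq_iff_eq_add, add_right_inj]
  ring_nf

theorem norm_sub_inner_smul_sq_s8 {φ χ : E} (hφ : ‖φ‖ = 1) :
    ‖χ - ⟪φ, χ⟫_ℂ • φ‖ ^ 2 = ‖χ‖ ^ 2 - ‖⟪φ, χ⟫_ℂ‖ ^ 2 := by
  have horth : ⟪⟪φ, χ⟫_ℂ • φ, χ - ⟪φ, χ⟫_ℂ • φ⟫_ℂ = 0 := by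
    rw [inner_smul_left, inner_sub_right, inner_smul_right, inner_self_eq_norm_sq_to_K, hφ]
    simp
  have h := norm_add_sq_eq_norm_sq_add_norm_sq_of_inner_eq_zero _ _ horth
  rw [add_sub_cancel, norm_smul, hφ, mul_one] at h
  linarith

theorem neg_le_real_inner_neg_I_mul_inner_apply {φ χ : E} {B : E →ₗ[ℂ] E} {b : ℝ}
    (hB : B.IsSymmetric) (hBb : ∀ v, ‖B v‖ ≤ b * ‖v‖) (hφ : ‖φ‖ = 1) :
    -(b * ‖⟪φ, χ⟫_ℂ‖ * ‖χ - ⟪φ, χ⟫_ℂ • φ‖) ≤ ⟪⟪φ, χ⟫_ℂ, -Complex.I * ⟪φ, B χ⟫_ℂ⟫_ℝ := by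
  set g := ⟪φ, χ⟫_ℂ
  set w := χ - g • φ
  have hsplit : ⟪φ, B χ⟫_ℂ = g * ⟪φ, B φ⟫_ℂ + ⟪φ, B w⟫_ℂ := by
    conv_lhs => rw [← sub_add_cancel χ (g • φ)]
    rw [map_add, map_smul, inner_add_right, inner_smul_right, add_comm]
  have hdiag : ⟪φ, B φ⟫_ℂ = ((RCLike.re ⟪φ, B φ⟫_ℂ : ℝ) : ℂ) :=
    (hB.coe_re_inner_self_apply φ).symm
  have hw : ‖⟪φ, B w⟫_ℂ‖ ≤ b * ‖w‖ :=
    (norm_inner_le_norm _ _).trans (by rw [hφ, one_mul]; exact hBb w)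
  have hdiag_re : (-Complex.I * (g * ⟪φ, B φ⟫_ℂ) * (starRingEnd ℂ) g).re = 0 := by
    rw [mul_comm g, mul_assoc, mul_assoc, Complex.mul_conj', hdiag, ← Complex.ofReal_pow,
      ← Complex.ofReal_mul, mul_comm, Complex.re_ofReal_mul]
    simp
  calc -(b * ‖g‖ * ‖w‖) ≤ -‖-Complex.I * ⟪φ, B w⟫_ℂ * (starRingEnd ℂ) g‖ := by
        rw [norm_mul, norm_mul, norm_neg, Complex.norm_I, one_mul, RCLike.norm_conj]
        nlinarith [norm_nonneg g]
    _ ≤ (-Complex.I * ⟪φ, B w⟫_ℂ * (starRingEnd ℂ) g).re := (abs_le.1 (Complex.abs_re_le_norm _)).1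
    _ = ⟪g, -Complex.I * ⟪φ, B χ⟫_ℂ⟫_ℝ := by
        rw [Complex.inner, hsplit, mul_add, add_mul, Complex.add_re, hdiag_re, zero_add]

theorem cos_sq_le_norm_inner_sq {φ χ : ℝ → E} {A B : ℝ → E →ₗ[ℂ] E} {b T : ℝ} (hb : 0 ≤ b)
    (hT : 0 ≤ T) (hbT : b * T < π / 2)
    (hA : ∀ t ∈ Icc 0 T, (A t).IsSymmetric) (hB : ∀ t ∈ Icc 0 T, (B t).IsSymmetric)
    (hBb : ∀ t ∈ Icc 0 T, ∀ v, ‖B t v‖ ≤ b * ‖v‖)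
    (hφ : ∀ t ∈ Icc 0 T, HasDerivAt φ (-Complex.I • A t (φ t)) t)
    (hχ : ∀ t ∈ Icc 0 T, HasDerivAt χ (-Complex.I • (A t + B t) (χ t)) t)
    (h0 : φ 0 = χ 0) (hunit : ‖φ 0‖ = 1) :
    cos (b * T) ^ 2 ≤ ‖⟪φ T, χ T⟫_ℂ‖ ^ 2 := by
  have hφ1 : ∀ t ∈ Icc 0 T, ‖φ t‖ = 1 := fun t ht =>
    (norm_eq_of_hasDerivAt_schrodinger hA hφ t ht).trans hunit
  have hχ1 : ∀ t ∈ Icc 0 T, ‖χ t‖ = 1 := fun t ht =>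
    ((norm_eq_of_hasDerivAt_schrodinger (fun s hs => (hA s hs).add (hB s hs)) hχ t ht).trans
      (h0 ▸ hunit))
  refine cos_sq_le_of_hasDerivAt hb hT hbT
    (fun t ht => (hasDerivAt_inner_of_schrodinger (hA t ht) (hφ t ht) (hχ t ht)).norm_sq) ?_ ?_
  · rw [← h0, inner_self_eq_norm_sq_to_K, hunit]
    simp
  · intro t ht
    have ht' := Ico_subset_Icc_self ht
    have hpyth := norm_sub_inner_smul_sq_s8 (χ := χ t) (hφ1 t ht')
    rw [hχ1 t ht', one_pow] at hpyth
    rw [sqrt_sq (norm_nonneg _), ← hpyth, sqrt_sq (norm_nonneg _)]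
    have := neg_le_real_inner_neg_I_mul_inner_apply (χ := χ t) (hB t ht') (hBb t ht') (hφ1 t ht')
    linarith

end Schrodinger

noncomputable def dampingFactor (γ : ℝ → ℝ) (t : ℝ) : ℝ :=
  exp ((∫ s in (0 : ℝ)..t, γ s) / 2)

section Damping

variable {γ : ℝ → ℝ}

theorem hasDerivAt_dampingFactor (hγ : Continuous γ) (t : ℝ) :
    HasDerivAt (dampingFactor γ) (γ t / 2 * dampingFactor γ t) t := by
  have hE := intervalIntegral.integral_hasDerivAt_right (hγ.intervalIntegrable 0 t)
    hγ.stronglyMeasurable.stronglyMeasurableAtFilter hγ.continuousAt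
  exact ((hE.div_const 2).exp).congr_deriv (mul_comm _ _)

theorem dampingFactor_zero : dampingFactor γ 0 = 1 := by
  simp [dampingFactor]

theorem dampingFactor_sq_le {c T : ℝ} (hγ : Continuous γ) (hT : 0 ≤ T)
    (hγc : ∀ t ∈ Icc 0 T, γ t ≤ c) : dampingFactor γ T ^ 2 ≤ exp (c * T) := by
  have hint : ∫ s in (0 : ℝ)..T, γ s ≤ c * T := by
    simpa [mul_comm] using intervalIntegral.integral_mono_on (μ := MeasureTheory.volume) hT
      (hγ.intervalIntegrable 0 T) intervalIntegrable_const hγc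
  rw [dampingFactor, ← exp_nat_mul]
  exact exp_le_exp.2 (by push_cast; linarith)

end Damping

theorem stmt8_general (Ts Δbar γbar : ℝ) (hTs : 0 ≤ Ts) (hΔbar : 0 ≤ Δbar)
    (hbound : Δbar * Ts < Real.pi / 2)
    (H HΔ : ℝ → Matrix (Fin 2) (Fin 2) ℂ)
    (hHherm : ∀ t ∈ Set.Icc (0 : ℝ) Ts, (H t).IsHermitian)
    (hHΔherm : ∀ t ∈ Set.Icc (0 : ℝ) Ts, (HΔ t).IsHermitian)
    (hHΔnorm : ∀ t ∈ Set.Icc (0 : ℝ) Ts, opNorm (HΔ t) ≤ Δbar)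
    (γ : ℝ → ℝ) (hγcont : Continuous γ)
    (hγ : ∀ t ∈ Set.Icc (0 : ℝ) Ts, 0 ≤ γ t ∧ γ t ≤ γbar)
    (φ ψ : ℝ → EuclideanSpace ℂ (Fin 2))
    (hφ : ∀ t ∈ Set.Icc (0 : ℝ) Ts, HasDerivAt φ ((-Complex.I) • act (H t) (φ t)) t)
    (hψ : ∀ t ∈ Set.Icc (0 : ℝ) Ts, HasDerivAt ψ
      ((-Complex.I) • act (H t + HΔ t) (ψ t) - (1 / 2 * γ t) • ψ t) t)
    (hinit : φ 0 = ψ 0) (hunit : ‖φ 0‖ = 1) :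
    Real.cos (Δbar * Ts) ^ 2 * Real.exp (-(γbar * Ts)) ≤ ‖⟪φ Ts, ψ Ts⟫_ℂ‖ ^ 2 := by
  set G := dampingFactor γ
  have hχ : ∀ t ∈ Icc 0 Ts, HasDerivAt (fun s => G s • ψ s) (-Complex.I •
      (Matrix.toEuclideanLin (H t) + Matrix.toEuclideanLin (HΔ t)) (G t • ψ t)) t := by
    intro t ht
    rw [← map_add]
    exact (hasDerivAt_dampingFactor hγcont t).smul_cancel_damping (hψ t ht)
  have hfidelity := cos_sq_le_norm_inner_sq hΔbar hTs hbound
    (fun t ht => Matrix.isSymmetric_toEuclideanLin_iff.2 (hHherm t ht))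
    (fun t ht => Matrix.isSymmetric_toEuclideanLin_iff.2 (hHΔherm t ht))
    (fun t ht v => (norm_act_le (HΔ t) v).trans (by gcongr; exact hHΔnorm t ht)) hφ hχ
    (by simp [G, dampingFactor_zero, hinit]) hunit
  rw [inner_smul_right_eq_smul, norm_smul, mul_pow, Real.norm_eq_abs, sq_abs] at hfidelity
  have hG := dampingFactor_sq_le hγcont hTs (fun t ht => (hγ t ht).2)
  calc cos (Δbar * Ts) ^ 2 * exp (-(γbar * Ts))
      ≤ exp (γbar * Ts) * ‖⟪φ Ts, ψ Ts⟫_ℂ‖ ^ 2 * exp (-(γbar * Ts)) := by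
        gcongr
        exact hfidelity.trans (by gcongr)
    _ = ‖⟪φ Ts, ψ Ts⟫_ℂ‖ ^ 2 := by rw [mul_right_comm, ← exp_add, add_neg_cancel, exp_zero, one_mul]

theorem stmt8 (Ts Δbar γbar : ℝ) (hTs : 0 ≤ Ts) (hΔbar : 0 ≤ Δbar) (hγbar : 0 ≤ γbar)
    (hbound : Δbar * Ts < Real.pi / 2)
    (H HΔ : ℝ → Matrix (Fin 2) (Fin 2) ℂ)
    (hHcont : Continuous H) (hHΔcont : Continuous HΔ)
    (hHherm : ∀ t ∈ Set.Icc (0 : ℝ) Ts, (H t).IsHermitian)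
    (hHΔherm : ∀ t ∈ Set.Icc (0 : ℝ) Ts, (HΔ t).IsHermitian)
    (hHΔnorm : ∀ t ∈ Set.Icc (0 : ℝ) Ts, opNorm (HΔ t) ≤ Δbar)
    (γ : ℝ → ℝ) (hγcont : Continuous γ)
    (hγ : ∀ t ∈ Set.Icc (0 : ℝ) Ts, 0 ≤ γ t ∧ γ t ≤ γbar)
    (φ ψ : ℝ → EuclideanSpace ℂ (Fin 2))
    (hφ : ∀ t ∈ Set.Icc (0 : ℝ) Ts, HasDerivAt φ ((-Complex.I) • act (H t) (φ t)) t)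
    (hψ : ∀ t ∈ Set.Icc (0 : ℝ) Ts, HasDerivAt ψ
      ((-Complex.I) • act (H t + HΔ t) (ψ t) - (1 / 2 * γ t) • ψ t) t)
    (hinit : φ 0 = ψ 0) (hunit : ‖φ 0‖ = 1) :
    Real.cos (Δbar * Ts) ^ 2 * Real.exp (-(γbar * Ts)) ≤ ‖⟪φ Ts, ψ Ts⟫_ℂ‖ ^ 2 :=
  stmt8_general Ts Δbar γbar hTs hΔbar hbound H HΔ hHherm hHΔherm hHΔnorm γ hγcont hγ φ ψ hφ hψ
    hinit hunit
end

section
/- Let ρ be a 2×2 positive semidefinite Hermitian complex matrix with trace 1, let a and b be unit vectors in ℂ², let g ∈ [0, 1] and let φ ∈ [0, π/4]. Suppose that Re⟨b, ρ b⟩ ≥ 1 - g and |⟨a, b⟩| ≥ cos(φ). Then Re⟨a, ρ a⟩ ≥ cos²(φ)·(1 - g) - (1/2)·sin(2φ). -/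
/-!
Write `ρ = Bᴴ B`, so that `⟨v, ρ v⟩ = ‖B v‖²`, and complete `b` to an orthonormal basis
`b, b'` of `ℂ²`. Then `a = c b + s b'` with `|c|² + |s|² = 1` and `|c| ≥ cos φ`, while
`y = B b`, `z = B b'` satisfy `‖y‖² + ‖z‖² = tr ρ = 1` and `‖y‖² ≥ 1 - g`. The reverse triangle
inequality gives `‖B a‖² ≥ (|c| ‖y‖ - |s| ‖z‖)² ≥ |c|² ‖y‖² - |c| |s|`, and since
`t ↦ t √(1 - t²)` decreases on `[1/√2, 1]`, `|c| |s| ≤ cos φ sin φ = sin (2φ) / 2`.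
-/

open scoped InnerProductSpace ComplexOrder

open scoped Matrix

theorem Real.half_le_cos_sq_of_mem_Icc {φ : ℝ} (hφ : φ ∈ Set.Icc 0 (Real.pi / 4)) :
    1 / 2 ≤ Real.cos φ ^ 2 := by
  have : 0 ≤ Real.cos (2 * φ) :=
    Real.cos_nonneg_of_mem_Icc ⟨by linarith [hφ.1, Real.pi_pos], by linarith [hφ.2, Real.pi_pos]⟩
  rw [Real.cos_sq]
  linarith

theorem mul_le_mul_of_le_of_sq_add_sq_eq_one {c s C S : ℝ} (hc : 0 ≤ c) (hs : 0 ≤ s)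
    (hS : 0 ≤ S) (hcC : c ≤ C) (hc2 : 1 / 2 ≤ c ^ 2) (hcs : c ^ 2 + s ^ 2 = 1)
    (hCS : C ^ 2 + S ^ 2 = 1) : C * S ≤ c * s := by
  have hc2C2 : c ^ 2 ≤ C ^ 2 := pow_le_pow_left₀ hc hcC 2
  have hsq : (C * S) ^ 2 ≤ (c * s) ^ 2 := by
    rw [mul_pow, mul_pow, show S ^ 2 = 1 - C ^ 2 by linarith, show s ^ 2 = 1 - c ^ 2 by linarith]
    -- `C²(1 - C²) - c²(1 - c²) = (C² - c²)(1 - C² - c²) ≤ 0`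
    nlinarith
  exact (pow_le_pow_iff_left₀ (mul_nonneg (hc.trans hcC) hS) (mul_nonneg hc hs)
    two_ne_zero).mp hsq

theorem norm_sq_mul_norm_sq_sub_le_norm_smul_add_smul_sq {𝕜 E : Type*} [NormedField 𝕜]
    [SeminormedAddCommGroup E] [NormedSpace 𝕜 E] (c s : 𝕜) (y z : E) :
    ‖c‖ ^ 2 * ‖y‖ ^ 2 - ‖c‖ * ‖s‖ * (‖y‖ ^ 2 + ‖z‖ ^ 2) ≤ ‖c • y + s • z‖ ^ 2 := by
  have hrev : |‖c‖ * ‖y‖ - ‖s‖ * ‖z‖| ≤ ‖c • y + s • z‖ := by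
    simpa [norm_smul] using abs_norm_sub_norm_le (c • y) (-(s • z))
  have hsq : (‖c‖ * ‖y‖ - ‖s‖ * ‖z‖) ^ 2 ≤ ‖c • y + s • z‖ ^ 2 := by
    simpa using pow_le_pow_left₀ (abs_nonneg _) hrev 2
  nlinarith [mul_nonneg (norm_nonneg c) (norm_nonneg s), sq_nonneg (‖y‖ - ‖z‖),
    sq_nonneg (‖s‖ * ‖z‖)]

theorem cos_sq_mul_sub_le_norm_smul_add_smul_sq {𝕜 E : Type*} [NormedField 𝕜]
    [SeminormedAddCommGroup E] [NormedSpace 𝕜 E] {c s : 𝕜} {y z : E} {g φ : ℝ}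
    (hφ : φ ∈ Set.Icc 0 (Real.pi / 4)) (hcs : ‖c‖ ^ 2 + ‖s‖ ^ 2 = 1)
    (hyz : ‖y‖ ^ 2 + ‖z‖ ^ 2 = 1) (hy : 1 - g ≤ ‖y‖ ^ 2) (hc : Real.cos φ ≤ ‖c‖) :
    Real.cos φ ^ 2 * (1 - g) - 1 / 2 * Real.sin (2 * φ) ≤ ‖c • y + s • z‖ ^ 2 := by
  have hcos : 0 ≤ Real.cos φ :=
    Real.cos_nonneg_of_mem_Icc ⟨by linarith [hφ.1, Real.pi_pos], by linarith [hφ.2, Real.pi_pos]⟩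
  have hsin : 0 ≤ Real.sin φ :=
    Real.sin_nonneg_of_nonneg_of_le_pi hφ.1 (by linarith [hφ.2, Real.pi_pos])
  have hcs_le : ‖c‖ * ‖s‖ ≤ Real.cos φ * Real.sin φ :=
    mul_le_mul_of_le_of_sq_add_sq_eq_one hcos hsin (norm_nonneg s) hc
      (Real.half_le_cos_sq_of_mem_Icc hφ) (by rw [add_comm, Real.sin_sq_add_cos_sq]) hcs
  have hcos_sq : Real.cos φ ^ 2 * (1 - g) ≤ ‖c‖ ^ 2 * ‖y‖ ^ 2 := by
    have hc2 := pow_le_pow_left₀ hcos hc 2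
    rcases le_or_gt 0 (1 - g) with hg | hg
    · exact mul_le_mul hc2 hy hg (sq_nonneg _)
    · nlinarith [sq_nonneg (‖c‖ * ‖y‖)]
  have hlower := norm_sq_mul_norm_sq_sub_le_norm_smul_add_smul_sq c s y z
  rw [hyz, mul_one] at hlower
  rw [Real.sin_two_mul]
  linarith

theorem exists_orthonormalBasis_apply_eq {𝕜 E ι : Type*} [RCLike 𝕜] [NormedAddCommGroup E]
    [InnerProductSpace 𝕜 E] [FiniteDimensional 𝕜 E] [Fintype ι]
    (hι : Module.finrank 𝕜 E = Fintype.card ι) (i : ι) {v : E} (hv : ‖v‖ = 1) :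
    ∃ e : OrthonormalBasis ι 𝕜 E, e i = v := by
  have hon : Orthonormal 𝕜 (({i} : Set ι).domRestrict fun _ ↦ v) :=
    ⟨fun _ ↦ hv, fun j k hjk ↦ absurd (Subsingleton.elim j k) hjk⟩
  obtain ⟨e, he⟩ := hon.exists_orthonormalBasis_extension_of_card_eq hι
  exact ⟨e, he i rfl⟩

open scoped MatrixOrder in
theorem Matrix.PosSemidef.exists_eq_conjTranspose_mul_self {𝕜 n : Type*} [RCLike 𝕜]
    [Fintype n] [DecidableEq n] {ρ : Matrix n n 𝕜} (hρ : ρ.PosSemidef) : ∃ B, ρ = Bᴴ * B :=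
  CStarAlgebra.nonneg_iff_eq_star_mul_self.mp hρ.nonneg

theorem inner_act_conjTranspose_mul_self {n : ℕ} (B : Matrix (Fin n) (Fin n) ℂ)
    (v w : EuclideanSpace ℂ (Fin n)) : ⟪v, act (Bᴴ * B) w⟫_ℂ = ⟪act B v, act B w⟫_ℂ := by
  have hmul : act (Bᴴ * B) w = act Bᴴ (act B w) := by simp [act, Matrix.toLpLin_mul_same]
  rw [hmul, act, Matrix.toEuclideanLin_conjTranspose_eq_adjoint, LinearMap.adjoint_inner_right]
  rfl

theorem re_inner_act_conjTranspose_mul_self_self {n : ℕ} (B : Matrix (Fin n) (Fin n) ℂ)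
    (v : EuclideanSpace ℂ (Fin n)) : (⟪v, act (Bᴴ * B) v⟫_ℂ).re = ‖act B v‖ ^ 2 := by
  rw [inner_act_conjTranspose_mul_self]
  exact inner_self_eq_norm_sq (𝕜 := ℂ) (act B v)

theorem sum_inner_act_orthonormalBasis {n : ℕ} {ι : Type*} [Fintype ι]
    (M : Matrix (Fin n) (Fin n) ℂ) (e : OrthonormalBasis ι ℂ (EuclideanSpace ℂ (Fin n))) :
    ∑ i, ⟪e i, act M (e i)⟫_ℂ = M.trace := by
  simp only [act]
  rw [← LinearMap.trace_eq_sum_inner, Matrix.toEuclideanLin_eq_toLin_orthonormal,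
    Matrix.trace_toLin_eq]

theorem stmt9_general (ρ : Matrix (Fin 2) (Fin 2) ℂ) (hρ : ρ.PosSemidef) (htr : ρ.trace = 1)
    (a b : EuclideanSpace ℂ (Fin 2)) (ha : ‖a‖ = 1) (hb : ‖b‖ = 1)
    (g : ℝ)
    (φ : ℝ) (hφ : φ ∈ Set.Icc (0 : ℝ) (Real.pi / 4))
    (h1 : 1 - g ≤ (⟪b, act ρ b⟫_ℂ).re)
    (h2 : Real.cos φ ≤ ‖⟪a, b⟫_ℂ‖) :
    Real.cos φ ^ 2 * (1 - g) - 1 / 2 * Real.sin (2 * φ) ≤ (⟪a, act ρ a⟫_ℂ).re := by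
  obtain ⟨B, rfl⟩ := hρ.exists_eq_conjTranspose_mul_self
  obtain ⟨e, he⟩ := exists_orthonormalBasis_apply_eq (𝕜 := ℂ)
    (finrank_euclideanSpace_fin.trans (Fintype.card_fin 2).symm) 0 hb
  rw [re_inner_act_conjTranspose_mul_self_self] at h1 ⊢
  have hx : act B a = ⟪b, a⟫_ℂ • act B b + ⟪e 1, a⟫_ℂ • act B (e 1) := by
    conv_lhs => rw [← e.sum_repr' a]
    simp [act, Fin.sum_univ_two, he]
  have hcs : ‖⟪b, a⟫_ℂ‖ ^ 2 + ‖⟪e 1, a⟫_ℂ‖ ^ 2 = 1 := by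
    simpa [Fin.sum_univ_two, he, ha] using e.sum_sq_norm_inner_right a
  have hyz : ‖act B b‖ ^ 2 + ‖act B (e 1)‖ ^ 2 = 1 := by
    simpa [Fin.sum_univ_two, he, re_inner_act_conjTranspose_mul_self_self, htr] using
      congrArg Complex.re (sum_inner_act_orthonormalBasis (Bᴴ * B) e)
  rw [hx]
  exact cos_sq_mul_sub_le_norm_smul_add_smul_sq hφ hcs hyz h1 (h2.trans_eq (norm_inner_symm a b))

theorem stmt9 (ρ : Matrix (Fin 2) (Fin 2) ℂ) (hρ : ρ.PosSemidef) (htr : ρ.trace = 1)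
    (a b : EuclideanSpace ℂ (Fin 2)) (ha : ‖a‖ = 1) (hb : ‖b‖ = 1)
    (g : ℝ) (hg : g ∈ Set.Icc (0 : ℝ) 1)
    (φ : ℝ) (hφ : φ ∈ Set.Icc (0 : ℝ) (Real.pi / 4))
    (h1 : 1 - g ≤ (⟪b, act ρ b⟫_ℂ).re)
    (h2 : Real.cos φ ≤ ‖⟪a, b⟫_ℂ‖) :
    Real.cos φ ^ 2 * (1 - g) - 1 / 2 * Real.sin (2 * φ) ≤ (⟪a, act ρ a⟫_ℂ).re :=
  stmt9_general ρ hρ htr a b ha hb g φ hφ h1 h2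
end
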